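/- For m1, m2 > 0 and p ∈ [0,1): g(t, p, m1, m2) ≤ 0 for some t ≥ 0 holds if and only if m1 ≤ ((1−p)²/4)·m2 and t ∈ [0, t*(p,m1,m2)], where, under the hypothesis m1 ≤ ((1−p)²/4)·m2 with m1 strictly less than ((1−p)²/4)·m2, t*(p,m1,m2) is the unique positive real root of g(t, p, m1, m2) = 0 in t. -/
import Mathlib


/-- The polynomial `g` characterizing extreme equilibria. -/
noncomputable def g (t p m1 m2 : ℝ) : ℝ :=
  4*t^3 + 4*(3*m1+m2)*t^2
    + (12*m1^2 + (2+8*p-2*p^2)*m1*m2 - (1-p)^2*m2^2)*t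
    + m1*(m1+p*m2)*(4*m1 - (1-p)^2*m2)

set_option maxHeartbeats 1000000 in
/-- For `t ≥ 0`, `g(t,p,m1,m2) ≤ 0` holds iff `m1 ≤ ((1-p)^2/4) m2` and
`t ∈ [0, t*(p,m1,m2)]`, where `t*` is the unique positive root of
`g(·,p,m1,m2)` when `m1 < ((1-p)^2/4) m2`. -/
theorem stmt5 (m1 m2 p : ℝ) (hm1 : 0 < m1) (hm2 : 0 < m2)
    (hp0 : 0 ≤ p) (hp1 : p < 1) :
    (∀ t : ℝ, 0 ≤ t → g t p m1 m2 ≤ 0 → m1 ≤ (1-p)^2/4 * m2) ∧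
    (m1 < (1-p)^2/4 * m2 →
      ∃! ts : ℝ, 0 < ts ∧ g ts p m1 m2 = 0 ∧
        ∀ t : ℝ, 0 ≤ t → (g t p m1 m2 ≤ 0 ↔ t ≤ ts)) := by
  constructor
  · -- part 1
    intro t ht hg
    by_contra h
    push_neg at h
    have h4 : (1-p)^2*m2 < 4*m1 := by nlinarith
    have hc : 0 < 12*m1^2 + (2+8*p-2*p^2)*m1*m2 - (1-p)^2*m2^2 := by
      nlinarith [mul_pos hm1 hm2, mul_lt_mul_of_pos_right h4 hm2,
        mul_lt_mul_of_pos_left h4 hm1, sq_nonneg (1+p)]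
    have hd : 0 < m1*(m1+p*m2)*(4*m1 - (1-p)^2*m2) := by
      have h1 : 0 < m1 + p*m2 := by positivity
      have h2 : 0 < 4*m1 - (1-p)^2*m2 := by linarith
      positivity
    have : 0 < g t p m1 m2 := by
      unfold g
      nlinarith [pow_nonneg ht 3, sq_nonneg t, mul_nonneg hc.le ht,
        mul_nonneg (mul_nonneg (by linarith : (0:ℝ) ≤ 3*m1+m2) ht) ht]
    linarith
  · intro hlt
    have h4 : 4*m1 < (1-p)^2*m2 := by nlinarith
    have hd : m1*(m1+p*m2)*(4*m1 - (1-p)^2*m2) < 0 := by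
      have h1 : 0 < m1 + p*m2 := by positivity
      have h2 : 4*m1 - (1-p)^2*m2 < 0 := by linarith
      exact mul_neg_of_pos_of_neg (mul_pos hm1 h1) h2
    have hg0 : g 0 p m1 m2 < 0 := by unfold g; nlinarith
    have hq1 : (1-p)^2 ≤ 1 := by nlinarith
    have hm14 : 4*m1 < m2 := by nlinarith
    have hgm2 : 0 < g m2 p m1 m2 := by
      unfold g
      nlinarith [mul_pos hm2 hm2, mul_pos (mul_pos hm2 hm2) hm2, mul_pos hm1 hm2,
        sq_nonneg (1-p), mul_pos (mul_pos hm1 hm1) hm2, mul_pos (mul_pos hm1 hm2) hm2,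
        mul_nonneg (mul_nonneg hp0 hm1.le) hm2.le,
        mul_nonneg (mul_nonneg (mul_nonneg hp0 hm1.le) hm2.le) hm2.le]
    have hcont : ContinuousOn (fun t => g t p m1 m2) (Set.Icc 0 m2) := by
      unfold g; fun_prop
    obtain ⟨ts, htsmem, htsroot'⟩ := intermediate_value_Icc hm2.le hcont
      (Set.mem_Icc.mpr ⟨hg0.le, hgm2.le⟩)
    have htsroot : g ts p m1 m2 = 0 := htsroot'
    have htspos : 0 < ts := by
      rcases lt_or_eq_of_le htsmem.1 with h | h
      · exact h
      · exfalso; rw [← h] at htsroot; linarith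
    -- key: the quadratic cofactor is positive for t ≥ 0
    have hQ0 : 0 < 4*ts^2 + 4*(3*m1+m2)*ts + (12*m1^2 + (2+8*p-2*p^2)*m1*m2 - (1-p)^2*m2^2) := by
      have hts2 : g ts p m1 m2 = 0 := htsroot
      unfold g at hts2
      have hmul : ts * (4*ts^2 + 4*(3*m1+m2)*ts + (12*m1^2 + (2+8*p-2*p^2)*m1*m2 - (1-p)^2*m2^2))
          = - (m1*(m1+p*m2)*(4*m1 - (1-p)^2*m2)) := by linear_combination hts2
      by_contra hle
      push_neg at hle
      linarith [mul_nonpos_of_nonneg_of_nonpos htspos.le hle, hmul, hd]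
    have key : ∀ t : ℝ, 0 ≤ t → (g t p m1 m2 ≤ 0 ↔ t ≤ ts) := by
      intro t ht
      have hQ : 0 < 4*(t^2+t*ts+ts^2) + 4*(3*m1+m2)*(t+ts)
          + (12*m1^2 + (2+8*p-2*p^2)*m1*m2 - (1-p)^2*m2^2) := by
        nlinarith [sq_nonneg t, mul_nonneg ht htspos.le,
          mul_nonneg (by linarith : (0:ℝ) ≤ 3*m1+m2) ht]
      have hfac : g t p m1 m2 = (t - ts) * (4*(t^2+t*ts+ts^2) + 4*(3*m1+m2)*(t+ts)
          + (12*m1^2 + (2+8*p-2*p^2)*m1*m2 - (1-p)^2*m2^2)) := by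
        have hts2 : g ts p m1 m2 = 0 := htsroot
        unfold g at hts2 ⊢
        linear_combination hts2
      rw [hfac]
      constructor
      · intro hle
        by_contra hgt
        push_neg at hgt
        linarith [mul_pos (sub_pos.mpr hgt) hQ]
      · intro hle
        exact mul_nonpos_of_nonpos_of_nonneg (by linarith) hQ.le
    refine ⟨ts, ⟨htspos, htsroot, key⟩, ?_⟩
    rintro y ⟨hy, hyroot, hykey⟩
    have h1 : y ≤ ts := (key y hy.le).mp (le_of_eq hyroot)
    have h2 : ts ≤ y := (hykey ts htspos.le).mp (le_of_eq htsroot)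
    linarith
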